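/- For all real numbers a and b, the truncated double-well potential satisfies f(b) − f(a) − f'(a)·(b−a) ≤ (b−a)². -/

import Mathlib

/-
The potential is C¹ and its derivative is again differentiable, with second derivative `2` off
`[-1, 1]` and `3φ² - 1` on it, so `f'' ≤ 2` everywhere. Hence `x ↦ x² - f x` is convex and lies
above its tangent line at `a`, which is the claimed bound.
-/

/-- The truncated double-well potential. -/
noncomputable def doubleWell (φ : ℝ) : ℝ :=
  if φ < -1 then (φ + 1) ^ 2
  else if φ ≤ 1 then (1 / 4) * (φ ^ 2 - 1) ^ 2
  else (φ - 1) ^ 2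

open Set

theorem hasDerivAt_of_eqOn_Iic_of_eqOn_Ici {F f g : ℝ → ℝ} {c d x : ℝ} (hf : EqOn F f (Iic c))
    (hg : EqOn F g (Ici c)) (hf' : x ≤ c → HasDerivAt f d x) (hg' : c ≤ x → HasDerivAt g d x) :
    HasDerivAt F d x := by
  have left : HasDerivWithinAt F d (Iic c) x := by
    by_cases hx : x ≤ c
    · exact (hf' hx).hasDerivWithinAt.congr hf (hf hx)
    · exact HasFDerivWithinAt.of_notMem_closure (by rwa [closure_Iic, mem_Iic])
  have right : HasDerivWithinAt F d (Ici c) x := by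
    by_cases hx : c ≤ x
    · exact (hg' hx).hasDerivWithinAt.congr hg (hg hx)
    · exact HasFDerivWithinAt.of_notMem_closure (by rwa [closure_Ici, mem_Ici])
  simpa only [Iic_union_Ici, hasDerivWithinAt_univ] using left.union right

theorem hasDerivAt_ite_lt_ite_le {f g h f' g' h' : ℝ → ℝ} {a b : ℝ} (hab : a ≤ b)
    (hf : ∀ x, HasDerivAt f (f' x) x) (hg : ∀ x, HasDerivAt g (g' x) x)
    (hh : ∀ x, HasDerivAt h (h' x) x) (hfga : f a = g a) (hghb : g b = h b)
    (hfga' : f' a = g' a) (hghb' : g' b = h' b) (x : ℝ) :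
    HasDerivAt (fun x ↦ if x < a then f x else if x ≤ b then g x else h x)
      (if x < a then f' x else if x ≤ b then g' x else h' x) x := by
  refine hasDerivAt_of_eqOn_Iic_of_eqOn_Ici (c := a) (f := f)
    (g := fun x ↦ if x ≤ b then g x else h x) ?_ ?_ ?_ ?_
  · intro y (hy : y ≤ a)
    rcases hy.lt_or_eq with hy | rfl
    · simp [hy]
    · simp [hab, hfga]
  · intro y (hy : a ≤ y)
    simp [not_lt.2 hy]
  · intro hx
    rcases hx.lt_or_eq with hx | rfl
    · simpa [hx] using hf x
    · simpa [hab, hfga'] using hf x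
  · intro hx
    simp only [not_lt.2 hx, if_false]
    refine hasDerivAt_of_eqOn_Iic_of_eqOn_Ici (c := b) (f := g) (g := h) ?_ ?_ ?_ ?_
    · intro y (hy : y ≤ b)
      simp [hy]
    · intro y (hy : b ≤ y)
      rcases hy.lt_or_eq with hy | rfl
      · simp [not_le.2 hy]
      · simp [hghb]
    · intro hx
      simpa [hx] using hg x
    · intro hx
      rcases hx.lt_or_eq with hx | rfl
      · simpa [not_le.2 hx] using hh x
      · simpa [hghb'] using hh b

theorem ConvexOn.add_mul_sub_le_of_hasDerivAt {S : Set ℝ} {f : ℝ → ℝ} {f' x y : ℝ}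
    (hfc : ConvexOn ℝ S f) (hx : x ∈ S) (hy : y ∈ S) (hf : HasDerivAt f f' x) :
    f x + f' * (y - x) ≤ f y := by
  rcases lt_trichotomy x y with hxy | rfl | hxy
  · have := hfc.le_slope_of_hasDerivAt hx hy hxy hf
    rw [slope_def_field, le_div_iff₀ (sub_pos.2 hxy)] at this
    linarith
  · simp
  · have := hfc.slope_le_of_hasDerivAt hy hx hxy hf
    rw [slope_def_field, div_le_iff₀ (sub_pos.2 hxy)] at this
    linarith

theorem sub_sub_mul_sub_le_of_hasDerivAt_of_le {f f' f'' : ℝ → ℝ} {K : ℝ}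
    (hf : ∀ x, HasDerivAt f (f' x) x) (hf' : ∀ x, HasDerivAt f' (f'' x) x) (hK : ∀ x, f'' x ≤ K)
    (a b : ℝ) : f b - f a - f' a * (b - a) ≤ K / 2 * (b - a) ^ 2 := by
  have hg (x : ℝ) : HasDerivAt (fun x ↦ K / 2 * x ^ 2 - f x) (K * x - f' x) x :=
    (((hasDerivAt_pow 2 x).const_mul (K / 2)).sub (hf x)).congr_deriv (by ring)
  have hg' (x : ℝ) : HasDerivAt (fun x ↦ K * x - f' x) (K - f'' x) x :=
    (((hasDerivAt_id x).const_mul K).sub (hf' x)).congr_deriv (by simp)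
  have hconvex : ConvexOn ℝ univ (fun x ↦ K / 2 * x ^ 2 - f x) := by
    refine convexOn_of_hasDerivWithinAt2_nonneg convex_univ
      (fun x _ ↦ (hg x).continuousAt.continuousWithinAt) (fun x _ ↦ (hg x).hasDerivWithinAt)
      (fun x _ ↦ (hg' x).hasDerivWithinAt) (fun x _ ↦ sub_nonneg.2 (hK x))
  have := hconvex.add_mul_sub_le_of_hasDerivAt (mem_univ a) (mem_univ b) (hg a)
  linear_combination this

noncomputable def doubleWellDeriv (φ : ℝ) : ℝ :=
  if φ < -1 then 2 * (φ + 1)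
  else if φ ≤ 1 then φ ^ 3 - φ
  else 2 * (φ - 1)

noncomputable def doubleWellDeriv2 (φ : ℝ) : ℝ :=
  if φ < -1 then 2
  else if φ ≤ 1 then 3 * φ ^ 2 - 1
  else 2

theorem hasDerivAt_doubleWell (x : ℝ) : HasDerivAt doubleWell (doubleWellDeriv x) x := by
  have hl (y : ℝ) : HasDerivAt (fun φ : ℝ ↦ (φ + 1) ^ 2) (2 * (y + 1)) y :=
    (((hasDerivAt_id y).add_const 1).pow 2).congr_deriv (by simp)
  have hm (y : ℝ) : HasDerivAt (fun φ : ℝ ↦ 1 / 4 * (φ ^ 2 - 1) ^ 2) (y ^ 3 - y) y :=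
    ((((hasDerivAt_pow 2 y).sub_const 1).pow 2).const_mul (1 / 4 : ℝ)).congr_deriv (by ring)
  have hr (y : ℝ) : HasDerivAt (fun φ : ℝ ↦ (φ - 1) ^ 2) (2 * (y - 1)) y :=
    (((hasDerivAt_id y).sub_const 1).pow 2).congr_deriv (by simp)
  exact hasDerivAt_ite_lt_ite_le (by norm_num) hl hm hr (by norm_num) (by norm_num) (by norm_num)
    (by norm_num) x

theorem hasDerivAt_doubleWellDeriv (x : ℝ) :
    HasDerivAt doubleWellDeriv (doubleWellDeriv2 x) x := by
  have hl (y : ℝ) : HasDerivAt (fun φ : ℝ ↦ 2 * (φ + 1)) 2 y := by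
    simpa using ((hasDerivAt_id y).add_const 1).const_mul 2
  have hm (y : ℝ) : HasDerivAt (fun φ : ℝ ↦ φ ^ 3 - φ) (3 * y ^ 2 - 1) y :=
    ((hasDerivAt_pow 3 y).sub (hasDerivAt_id y)).congr_deriv (by simp)
  have hr (y : ℝ) : HasDerivAt (fun φ : ℝ ↦ 2 * (φ - 1)) 2 y := by
    simpa using ((hasDerivAt_id y).sub_const 1).const_mul 2
  exact hasDerivAt_ite_lt_ite_le (f' := fun _ ↦ 2) (h' := fun _ ↦ 2) (by norm_num) hl hm hr
    (by norm_num) (by norm_num) (by norm_num) (by norm_num) x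

theorem doubleWellDeriv2_le_two (x : ℝ) : doubleWellDeriv2 x ≤ 2 := by
  unfold doubleWellDeriv2
  split_ifs
  · rfl
  · nlinarith
  · rfl

/-- Second-order Taylor bound for the truncated double-well potential:
`f(b) − f(a) − f'(a)·(b−a) ≤ (b−a)²`. -/
theorem doubleWell_taylor_bound (a b : ℝ) :
    doubleWell b - doubleWell a - deriv doubleWell a * (b - a) ≤ (b - a) ^ 2 := by
  rw [(hasDerivAt_doubleWell a).deriv]
  simpa using sub_sub_mul_sub_le_of_hasDerivAt_of_le hasDerivAt_doubleWell
    hasDerivAt_doubleWellDeriv doubleWellDeriv2_le_two a b
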